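/- Let M be a Kripke model in which, for some world w and agent j, the worlds R_j-reachable from w are exactly {w_α' : α' ⊇ α extends α to x_j}, one for each of the two extensions, and suppose for each extension α' the formula ψ holds at w_{α'} iff a predicate Φ(α') holds. Then B_j ψ holds at w iff Φ(α') holds for all extensions α', and the dual \hat{B}_j ψ = ¬B_j¬ψ holds at w iff Φ(α') holds for some extension α'. Consequently the inductive translation mapping ∀ to B_j and ∃ to \hat{B}_j preserves truth of quantified Boolean formulas. -/
import Mathlib

/-- Inductive step of the TQBF reduction: if the worlds `R_j`-reachable from `w` are exactly
the two worlds `wt` and `wf` corresponding to the two extensions of the assignment `α` to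
`x_j`, and `ψ` holds at the world of an extension iff the predicate `Φ` (truth of the
remaining quantified formula under that extension) holds, then `B_j ψ` holds at `w` iff `Φ`
holds for all extensions, and `¬B_j¬ψ` holds at `w` iff `Φ` holds for some extension. -/
theorem quantifier_translation_step {W : Type} (R : W → W → Prop) (w wt wf : W)
    (satψ : W → Prop) (Φ : Bool → Prop)
    (hreach : ∀ v, R w v ↔ (v = wt ∨ v = wf))
    (ht : satψ wt ↔ Φ true) (hf : satψ wf ↔ Φ false) :
    ((∀ v, R w v → satψ v) ↔ ∀ b : Bool, Φ b) ∧
    ((¬ ∀ v, R w v → ¬ satψ v) ↔ ∃ b : Bool, Φ b) := by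
  constructor
  · constructor
    · intro h b
      cases b
      · exact hf.mp (h wf ((hreach wf).mpr (Or.inr rfl)))
      · exact ht.mp (h wt ((hreach wt).mpr (Or.inl rfl)))
    · intro h v hv
      rcases (hreach v).mp hv with rfl | rfl
      · exact ht.mpr (h true)
      · exact hf.mpr (h false)
  · constructor
    · intro h
      by_contra hc
      push_neg at hc
      apply h
      intro v hv hs
      rcases (hreach v).mp hv with rfl | rfl
      · exact hc true (ht.mp hs)
      · exact hc false (hf.mp hs)
    · rintro ⟨b, hb⟩ h
      cases b
      · exact h wf ((hreach wf).mpr (Or.inr rfl)) (hf.mpr hb)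
      · exact h wt ((hreach wt).mpr (Or.inl rfl)) (ht.mpr hb)
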